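/- arXiv:2507.05801 — 2 statements merged into one kernel-verified Lean document; each statement's English description precedes it below -/
import Mathlib

section
/- Fix η ∈ (0, β), and let Z_η = {z ∈ C⁰(ℝ, ℝᵈ) : sup_t e^{ηt}|z(t)| < ∞} with norm ‖z‖_η = sup_t e^{ηt}|z(t)|. Let h : ℝᵈ → ℝᵈ be C¹ with compact support and ‖h‖_{C¹} small, and let Λ : Z_η → Z_η be defined by Λ(z)(t) = ∫_{-∞}^t e^{A(t-τ)}πₛ[h(x*(τ)+z(τ)) - h(x*(τ))]dτ - ∫_{-∞}^t e^{A(t-τ)}πₛ[g(x*(τ),τ)+φ(τ)]dτ - ∫_t^{∞} e^{A(t-τ)}π_{cu}[h(x*(τ)+z(τ)) - h(x*(τ))]dτ + ∫_t^{∞} e^{A(t-τ)}π_{cu}[g(x*(τ),τ)+φ(τ)]dτ, where x* is a bounded continuous function, g(x*(·),·) ∈ Z_η, φ is bounded with φ(τ) = 0 for τ > 0, and the exponential trichotomy estimates hold with constants C_ε for ε small. Then Λ is well-defined, maps Z_η into itself, and satisfies ‖Λ(z₁) - Λ(z₂)‖_η ≤ C₁‖h‖_{C¹}‖z₁ - z₂‖_η;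 in particular if C₁‖h‖_{C¹} < 1, Λ has a unique fixed point in Z_η. -/
open Filter Real MeasureTheory Set
set_option synthInstance.maxHeartbeats 1000000
set_option maxHeartbeats 2000000

section Helpers

variable {E : Type*} [NormedAddCommGroup E] [NormedSpace ℝ E]

lemma aesm10 (T : ℝ → E →L[ℝ] E) (hT : Continuous T) {w : ℝ → E}
    (hw : AEStronglyMeasurable w (volume : Measure ℝ)) (t : ℝ) :
    AEStronglyMeasurable (fun τ => T (t - τ) (w τ)) (volume : Measure ℝ) := by
  exact (ContinuousLinearMap.apply ℝ E).flip.aestronglyMeasurable_comp₂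
    ((hT.comp (continuous_const.sub continuous_id)).aestronglyMeasurable) hw

lemma expInt_Iic {a : ℝ} (ha : 0 < a) (c : ℝ) :
    IntegrableOn (fun τ : ℝ => exp (a * τ)) (Iic c) := by
  have m : MeasurableEmbedding fun x : ℝ => -x := (Homeomorph.neg ℝ).measurableEmbedding
  rw [← Measure.map_neg_eq_self (volume : Measure ℝ)]
  rw [m.integrableOn_map_iff]
  simp only [Function.comp_def, neg_preimage, neg_Iic]
  have : IntegrableOn (fun x : ℝ => exp (-a * x)) (Ici (-c)) :=
    (integrableOn_Ici_iff_integrableOn_Ioi).mpr (exp_neg_integrableOn_Ioi _ ha)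
  simpa [neg_mul, mul_neg] using this

lemma expVal_Iic {a : ℝ} (ha : 0 < a) (c : ℝ) :
    ∫ τ in Iic c, exp (a * τ) = exp (a * c) / a := by
  have h1 := integral_comp_neg_Iic c (fun y : ℝ => exp (-a * y))
  simp only [neg_mul, mul_neg, neg_neg] at h1
  have h2 := integral_comp_mul_right_Ioi (fun y : ℝ => exp (-y)) (-c) ha
  simp only [integral_exp_neg_Ioi, smul_eq_mul, neg_mul] at h2
  calc ∫ τ in Iic c, exp (a * τ) = ∫ x in Ioi (-c), exp (-(a * x)) := by rw [← h1]
    _ = exp (a * c) / a := by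
        have : ∀ x : ℝ, exp (-(a*x)) = (fun y : ℝ => exp (-y)) (x * a) := by
          intro x; simp [mul_comm]
        rw [setIntegral_congr_fun measurableSet_Ioi (fun x _ => this x), h2,
          show - -(c*a) = a*c by ring, inv_mul_eq_div]

lemma expInt_Ici {a : ℝ} (ha : 0 < a) (c : ℝ) :
    IntegrableOn (fun τ : ℝ => exp (-(a * τ))) (Ici c) :=
  (integrableOn_Ici_iff_integrableOn_Ioi).mpr
    (by simpa [neg_mul] using exp_neg_integrableOn_Ioi c ha)

lemma expVal_Ici {a : ℝ} (ha : 0 < a) (c : ℝ) :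
    ∫ τ in Ici c, exp (-(a * τ)) = exp (-(a * c)) / a := by
  rw [MeasureTheory.integral_Ici_eq_integral_Ioi]
  have h2 := integral_comp_mul_right_Ioi (fun y : ℝ => exp (-y)) c ha
  simp only [integral_exp_neg_Ioi, smul_eq_mul] at h2
  have : ∀ x : ℝ, exp (-(a*x)) = (fun y : ℝ => exp (-y)) (x * a) := by
    intro x; simp [mul_comm]
  rw [setIntegral_congr_fun measurableSet_Ioi (fun x _ => this x), h2,
    show -(c*a) = -(a*c) by ring, inv_mul_eq_div]

lemma Spart10 {η β ε Cε : ℝ} (hηβ : η < β - ε) (hCε : 0 < Cε)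
    {S : ℝ → E →L[ℝ] E} (hScont : Continuous S)
    (hS : ∀ t, 0 ≤ t → ‖S t‖ ≤ Cε * exp (-(β - ε) * t))
    {w : ℝ → E} (hwm : AEStronglyMeasurable w (volume : Measure ℝ)) {C : ℝ}
    (hwb : ∀ τ, ‖w τ‖ ≤ C * exp (-(η * τ))) (t : ℝ) :
    IntegrableOn (fun τ => S (t - τ) (w τ)) (Iic t) ∧
    ‖∫ τ in Iic t, S (t - τ) (w τ)‖ ≤ Cε * C / (β - ε - η) * exp (-(η * t)) := by
  have ha : 0 < β - ε - η := by linarith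
  have hC : 0 ≤ C := le_trans (norm_nonneg (w 0)) (by simpa using hwb 0)
  set g : ℝ → ℝ := fun τ => (Cε * C * exp (-(β - ε) * t)) * exp ((β - ε - η) * τ) with hg_def
  have hgint : IntegrableOn g (Iic t) := (expInt_Iic ha t).const_mul _
  have hbound : ∀ τ ∈ Iic t, ‖S (t - τ) (w τ)‖ ≤ g τ := by
    intro τ hτ
    have h1 : ‖S (t - τ) (w τ)‖ ≤ ‖S (t - τ)‖ * ‖w τ‖ := (S (t - τ)).le_opNorm _
    have h2 : ‖S (t - τ)‖ ≤ Cε * exp (-(β - ε) * (t - τ)) :=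
      hS _ (by simp only [mem_Iic] at hτ; linarith)
    have hexp : exp (-(β - ε) * (t - τ)) * exp (-(η * τ))
        = exp (-(β - ε) * t) * exp ((β - ε - η) * τ) := by
      rw [← exp_add, ← exp_add]; congr 1; ring
    calc ‖S (t - τ) (w τ)‖ ≤ (Cε * exp (-(β - ε) * (t - τ))) * (C * exp (-(η * τ))) :=
          le_trans h1 (mul_le_mul h2 (hwb τ) (norm_nonneg _) (by positivity))
      _ = (Cε * C) * (exp (-(β - ε) * (t - τ)) * exp (-(η * τ))) := by ring
      _ = g τ := by rw [hexp, hg_def]; ring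
  have hintg : IntegrableOn (fun τ => S (t - τ) (w τ)) (Iic t) := by
    apply Integrable.mono' hgint ((aesm10 S hScont hwm t).restrict)
    exact (ae_restrict_iff' measurableSet_Iic).2 (ae_of_all _ hbound)
  refine ⟨hintg, ?_⟩
  have h4 : ‖∫ τ in Iic t, S (t - τ) (w τ)‖ ≤ ∫ τ in Iic t, g τ :=
    norm_integral_le_of_norm_le hgint
      ((ae_restrict_iff' measurableSet_Iic).2 (ae_of_all _ hbound))
  have h5 : ∫ τ in Iic t, g τ = Cε * C / (β - ε - η) * exp (-(η * t)) := by
    rw [hg_def, MeasureTheory.integral_const_mul, expVal_Iic ha t]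
    have hexp : exp (-(β - ε) * t) * exp ((β - ε - η) * t) = exp (-(η * t)) := by
      rw [← exp_add]; congr 1; ring
    linear_combination (Cε * C / (β - ε - η)) * hexp
  linarith [h4, h5.le, h5.ge]

lemma Upart10 {η β ε Cε : ℝ} (hε : 0 < ε) (hεη : ε < η) (hηβ : η < β - ε) (hCε : 0 < Cε)
    {U : ℝ → E →L[ℝ] E} (hUcont : Continuous U)
    (hU : ∀ t, t ≤ 0 → ‖U t‖ ≤ Cε * (exp ((β - ε) * t) + exp (-ε * t)))
    {w : ℝ → E} (hwm : AEStronglyMeasurable w (volume : Measure ℝ)) {C : ℝ}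
    (hwb : ∀ τ, ‖w τ‖ ≤ C * exp (-(η * τ))) (t : ℝ) :
    IntegrableOn (fun τ => U (t - τ) (w τ)) (Ici t) ∧
    ‖∫ τ in Ici t, U (t - τ) (w τ)‖ ≤
      Cε * C * (1 / (β - ε + η) + 1 / (η - ε)) * exp (-(η * t)) := by
  have hb1 : 0 < β - ε + η := by linarith
  have hb2 : 0 < η - ε := by linarith
  have hC : 0 ≤ C := le_trans (norm_nonneg (w 0)) (by simpa using hwb 0)
  set g : ℝ → ℝ := fun τ => (Cε * C * exp ((β - ε) * t)) * exp (-((β - ε + η) * τ))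
      + (Cε * C * exp (-ε * t)) * exp (-((η - ε) * τ)) with hg_def
  have hgint : IntegrableOn g (Ici t) :=
    ((expInt_Ici hb1 t).const_mul _).add ((expInt_Ici hb2 t).const_mul _)
  have hbound : ∀ τ ∈ Ici t, ‖U (t - τ) (w τ)‖ ≤ g τ := by
    intro τ hτ
    have h1 : ‖U (t - τ) (w τ)‖ ≤ ‖U (t - τ)‖ * ‖w τ‖ := (U (t - τ)).le_opNorm _
    have h2 : ‖U (t - τ)‖ ≤ Cε * (exp ((β - ε) * (t - τ)) + exp (-ε * (t - τ))) :=
      hU _ (by simp only [mem_Ici] at hτ; linarith)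
    have he1 : exp ((β - ε) * (t - τ)) * exp (-(η * τ))
        = exp ((β - ε) * t) * exp (-((β - ε + η) * τ)) := by
      rw [← exp_add, ← exp_add]; congr 1; ring
    have he2 : exp (-ε * (t - τ)) * exp (-(η * τ))
        = exp (-ε * t) * exp (-((η - ε) * τ)) := by
      rw [← exp_add, ← exp_add]; congr 1; ring
    calc ‖U (t - τ) (w τ)‖
        ≤ (Cε * (exp ((β - ε) * (t - τ)) + exp (-ε * (t - τ)))) * (C * exp (-(η * τ))) :=
          le_trans h1 (mul_le_mul h2 (hwb τ) (norm_nonneg _) (by positivity))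
      _ = (Cε * C) * (exp ((β - ε) * (t - τ)) * exp (-(η * τ)))
          + (Cε * C) * (exp (-ε * (t - τ)) * exp (-(η * τ))) := by ring
      _ = g τ := by rw [he1, he2, hg_def]; ring
  have hintg : IntegrableOn (fun τ => U (t - τ) (w τ)) (Ici t) := by
    apply Integrable.mono' hgint ((aesm10 U hUcont hwm t).restrict)
    exact (ae_restrict_iff' measurableSet_Ici).2 (ae_of_all _ hbound)
  refine ⟨hintg, ?_⟩
  have h4 : ‖∫ τ in Ici t, U (t - τ) (w τ)‖ ≤ ∫ τ in Ici t, g τ :=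
    norm_integral_le_of_norm_le hgint
      ((ae_restrict_iff' measurableSet_Ici).2 (ae_of_all _ hbound))
  have h5 : ∫ τ in Ici t, g τ
      = Cε * C * (1 / (β - ε + η) + 1 / (η - ε)) * exp (-(η * t)) := by
    rw [hg_def, MeasureTheory.integral_add ((expInt_Ici hb1 t).const_mul _)
      ((expInt_Ici hb2 t).const_mul _), MeasureTheory.integral_const_mul,
      MeasureTheory.integral_const_mul, expVal_Ici hb1 t, expVal_Ici hb2 t]
    have he1 : exp ((β - ε) * t) * exp (-((β - ε + η) * t)) = exp (-(η * t)) := by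
      rw [← exp_add]; congr 1; ring
    have he2 : exp (-ε * t) * exp (-((η - ε) * t)) = exp (-(η * t)) := by
      rw [← exp_add]; congr 1; ring
    linear_combination (Cε * C / (β - ε + η)) * he1 + (Cε * C / (η - ε)) * he2
  linarith [h4, h5.le, h5.ge]

lemma ae_ne_pt (t₀ : ℝ) : ∀ᵐ τ : ℝ ∂(volume : Measure ℝ), τ ≠ t₀ := by
  rw [ae_iff]
  simpa [Set.setOf_eq_eq_singleton] using measure_singleton (μ := (volume : Measure ℝ)) t₀

lemma contS10 {η β ε Cε : ℝ} (hη : 0 < η) (hηβ : η < β - ε) (hCε : 0 < Cε)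
    {S : ℝ → E →L[ℝ] E} (hScont : Continuous S)
    (hS : ∀ t, 0 ≤ t → ‖S t‖ ≤ Cε * exp (-(β - ε) * t))
    {w : ℝ → E} (hwm : AEStronglyMeasurable w (volume : Measure ℝ)) {C : ℝ}
    (hwb : ∀ τ, ‖w τ‖ ≤ C * exp (-(η * τ))) :
    Continuous fun t => ∫ τ in Iic t, S (t - τ) (w τ) := by
  have ha : 0 < β - ε - η := by linarith
  have hb : 0 < β - ε := by linarith
  have hC : 0 ≤ C := le_trans (norm_nonneg (w 0)) (by simpa using hwb 0)
  rw [continuous_iff_continuousAt]; intro t₀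
  have key : (fun t => ∫ τ in Iic t, S (t - τ) (w τ))
      = fun t => ∫ τ, (Iic t).indicator (fun τ => S (t - τ) (w τ)) τ :=
    funext fun t => (integral_indicator measurableSet_Iic).symm
  rw [key]
  apply MeasureTheory.continuousAt_of_dominated (bound := fun τ =>
      (Iic (t₀ + 1)).indicator
        (fun τ => (Cε * C * exp (-(β - ε) * (t₀ - 1))) * exp ((β - ε - η) * τ)) τ)
  · filter_upwards with t
    exact (aesm10 S hScont hwm t).indicator measurableSet_Iic
  · filter_upwards [Ioo_mem_nhds (by linarith : t₀ - 1 < t₀) (by linarith : t₀ < t₀ + 1)]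
      with t ht
    apply ae_of_all; intro τ
    by_cases hτ : τ ≤ t
    · rw [indicator_of_mem (mem_Iic.2 hτ),
        indicator_of_mem (mem_Iic.2 (le_trans hτ ht.2.le))]
      have h1 : ‖S (t - τ) (w τ)‖ ≤ ‖S (t - τ)‖ * ‖w τ‖ := (S (t - τ)).le_opNorm _
      have h2 : ‖S (t - τ)‖ ≤ Cε * exp (-(β - ε) * (t - τ)) := hS _ (by linarith)
      have hexp : exp (-(β - ε) * (t - τ)) * exp (-(η * τ))
          = exp (-(β - ε) * t) * exp ((β - ε - η) * τ) := by
        rw [← exp_add, ← exp_add]; congr 1; ring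
      have h3 : exp (-(β - ε) * t) ≤ exp (-(β - ε) * (t₀ - 1)) := by
        apply exp_le_exp.2; nlinarith [ht.1]
      calc ‖S (t - τ) (w τ)‖
          ≤ (Cε * exp (-(β - ε) * (t - τ))) * (C * exp (-(η * τ))) :=
            le_trans h1 (mul_le_mul h2 (hwb τ) (norm_nonneg _) (by positivity))
        _ = (Cε * C) * (exp (-(β - ε) * (t - τ)) * exp (-(η * τ))) := by ring
        _ = (Cε * C * exp (-(β - ε) * t)) * exp ((β - ε - η) * τ) := by rw [hexp]; ring
        _ ≤ (Cε * C * exp (-(β - ε) * (t₀ - 1))) * exp ((β - ε - η) * τ) := by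
            apply mul_le_mul_of_nonneg_right _ (exp_pos _).le
            apply mul_le_mul_of_nonneg_left h3 (by positivity)
    · rw [indicator_of_notMem (by simpa using hτ)]
      simp only [norm_zero]
      exact indicator_nonneg (fun τ _ => by positivity) _
  · rw [integrable_indicator_iff measurableSet_Iic]
    exact (expInt_Iic ha _).const_mul _
  · filter_upwards [ae_ne_pt t₀] with τ hτ
    rcases lt_or_gt_of_ne hτ with hlt | hgt
    · have hcont : ContinuousAt (fun t => S (t - τ) (w τ)) t₀ :=
        ((ContinuousLinearMap.apply ℝ E (w τ)).continuous.comp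
          (hScont.comp (continuous_sub_right τ))).continuousAt
      apply hcont.congr
      filter_upwards [Ioi_mem_nhds hlt] with t ht
      exact (indicator_of_mem (mem_Iic.2 (le_of_lt ht))
        (fun τ' => S (t - τ') (w τ'))).symm
    · apply (continuousAt_const (y := (0 : E))).congr
      filter_upwards [Iio_mem_nhds hgt] with t ht
      exact (indicator_of_notMem (by simpa using not_le.2 ht)
        (fun τ' => S (t - τ') (w τ'))).symm

lemma contU10 {η β ε Cε : ℝ} (hε : 0 < ε) (hεη : ε < η) (hηβ : η < β - ε) (hCε : 0 < Cε)
    {U : ℝ → E →L[ℝ] E} (hUcont : Continuous U)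
    (hU : ∀ t, t ≤ 0 → ‖U t‖ ≤ Cε * (exp ((β - ε) * t) + exp (-ε * t)))
    {w : ℝ → E} (hwm : AEStronglyMeasurable w (volume : Measure ℝ)) {C : ℝ}
    (hwb : ∀ τ, ‖w τ‖ ≤ C * exp (-(η * τ))) :
    Continuous fun t => ∫ τ in Ici t, U (t - τ) (w τ) := by
  have hb1 : 0 < β - ε + η := by linarith
  have hb2 : 0 < η - ε := by linarith
  have hC : 0 ≤ C := le_trans (norm_nonneg (w 0)) (by simpa using hwb 0)
  rw [continuous_iff_continuousAt]; intro t₀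
  have key : (fun t => ∫ τ in Ici t, U (t - τ) (w τ))
      = fun t => ∫ τ, (Ici t).indicator (fun τ => U (t - τ) (w τ)) τ :=
    funext fun t => (integral_indicator measurableSet_Ici).symm
  rw [key]
  apply MeasureTheory.continuousAt_of_dominated (bound := fun τ =>
      (Ici (t₀ - 1)).indicator (fun τ =>
        (Cε * C * exp ((β - ε) * (t₀ + 1))) * exp (-((β - ε + η) * τ))
        + (Cε * C * exp (-ε * (t₀ - 1))) * exp (-((η - ε) * τ))) τ)
  · filter_upwards with t
    exact (aesm10 U hUcont hwm t).indicator measurableSet_Ici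
  · filter_upwards [Ioo_mem_nhds (by linarith : t₀ - 1 < t₀) (by linarith : t₀ < t₀ + 1)]
      with t ht
    apply ae_of_all; intro τ
    by_cases hτ : t ≤ τ
    · rw [indicator_of_mem (mem_Ici.2 hτ),
        indicator_of_mem (mem_Ici.2 (le_trans ht.1.le hτ))]
      have h1 : ‖U (t - τ) (w τ)‖ ≤ ‖U (t - τ)‖ * ‖w τ‖ := (U (t - τ)).le_opNorm _
      have h2 : ‖U (t - τ)‖ ≤ Cε * (exp ((β - ε) * (t - τ)) + exp (-ε * (t - τ))) :=
        hU _ (by linarith)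
      have he1 : exp ((β - ε) * (t - τ)) * exp (-(η * τ))
          = exp ((β - ε) * t) * exp (-((β - ε + η) * τ)) := by
        rw [← exp_add, ← exp_add]; congr 1; ring
      have he2 : exp (-ε * (t - τ)) * exp (-(η * τ))
          = exp (-ε * t) * exp (-((η - ε) * τ)) := by
        rw [← exp_add, ← exp_add]; congr 1; ring
      have h3 : exp ((β - ε) * t) ≤ exp ((β - ε) * (t₀ + 1)) := by
        apply exp_le_exp.2; nlinarith [ht.2]
      have h4 : exp (-ε * t) ≤ exp (-ε * (t₀ - 1)) := by
        apply exp_le_exp.2; nlinarith [ht.1]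
      calc ‖U (t - τ) (w τ)‖
          ≤ (Cε * (exp ((β - ε) * (t - τ)) + exp (-ε * (t - τ)))) * (C * exp (-(η * τ))) :=
            le_trans h1 (mul_le_mul h2 (hwb τ) (norm_nonneg _) (by positivity))
        _ = (Cε * C) * (exp ((β - ε) * (t - τ)) * exp (-(η * τ)))
            + (Cε * C) * (exp (-ε * (t - τ)) * exp (-(η * τ))) := by ring
        _ = (Cε * C * exp ((β - ε) * t)) * exp (-((β - ε + η) * τ))
            + (Cε * C * exp (-ε * t)) * exp (-((η - ε) * τ)) := by rw [he1, he2]; ring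
        _ ≤ (Cε * C * exp ((β - ε) * (t₀ + 1))) * exp (-((β - ε + η) * τ))
            + (Cε * C * exp (-ε * (t₀ - 1))) * exp (-((η - ε) * τ)) := by
            apply add_le_add
            · exact mul_le_mul_of_nonneg_right
                (mul_le_mul_of_nonneg_left h3 (by positivity)) (exp_pos _).le
            · exact mul_le_mul_of_nonneg_right
                (mul_le_mul_of_nonneg_left h4 (by positivity)) (exp_pos _).le
    · rw [indicator_of_notMem (by simpa using hτ)]
      simp only [norm_zero]
      apply indicator_nonneg (fun τ _ => by positivity)
  · rw [integrable_indicator_iff measurableSet_Ici]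
    exact ((expInt_Ici hb1 _).const_mul _).add ((expInt_Ici hb2 _).const_mul _)
  · filter_upwards [ae_ne_pt t₀] with τ hτ
    rcases lt_or_gt_of_ne hτ with hlt | hgt
    · apply (continuousAt_const (y := (0 : E))).congr
      filter_upwards [Ioi_mem_nhds hlt] with t ht
      exact (indicator_of_notMem (by simpa using not_le.2 ht)
        (fun τ' => U (t - τ') (w τ'))).symm
    · have hcont : ContinuousAt (fun t => U (t - τ) (w τ)) t₀ :=
        ((ContinuousLinearMap.apply ℝ E (w τ)).continuous.comp
          (hUcont.comp (continuous_sub_right τ))).continuousAt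
      apply hcont.congr
      filter_upwards [Iio_mem_nhds hgt] with t ht
      exact (indicator_of_mem (mem_Ici.2 (le_of_lt ht))
        (fun τ' => U (t - τ') (w τ'))).symm

end Helpers

/-- The weighted space `Z_η` of continuous functions with `sup_t e^{ηt}|z(t)| < ∞`. -/
def ZmemS10 {E : Type*} [NormedAddCommGroup E] (η : ℝ) (z : ℝ → E) : Prop :=
  Continuous z ∧ ∃ M : ℝ, ∀ t : ℝ, Real.exp (η * t) * ‖z t‖ ≤ M

/-- the integral operator `Λ` of the shadowing construction is well defined
on `Z_η`, maps `Z_η` into itself, satisfies the Lipschitz estimate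
`‖Λ(z₁) - Λ(z₂)‖_η ≤ C₁ ‖h‖_{C¹} ‖z₁ - z₂‖_η`, and hence has a unique fixed point in
`Z_η` when `C₁‖h‖_{C¹} < 1`.  Here `S t` plays the role of `e^{At}πₛ` and `Ucu t` of
`e^{At}π_{cu}`, satisfying the exponential trichotomy estimates. -/
theorem stmt_10 (d : ℕ) (η β ε Cε : ℝ)
    (hη : 0 < η) (hε : 0 < ε) (hεη : ε < η) (hηβ : η < β - ε) (hCε : 0 < Cε)
    (S Ucu : ℝ → EuclideanSpace ℝ (Fin d) →L[ℝ] EuclideanSpace ℝ (Fin d))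
    (hScont : Continuous S) (hUcont : Continuous Ucu)
    (hS : ∀ t : ℝ, 0 ≤ t → ‖S t‖ ≤ Cε * Real.exp (-(β - ε) * t))
    (hU : ∀ t : ℝ, t ≤ 0 → ‖Ucu t‖ ≤ Cε * (Real.exp ((β - ε) * t) + Real.exp (-ε * t)))
    (h : EuclideanSpace ℝ (Fin d) → EuclideanSpace ℝ (Fin d))
    (L : ℝ) (hL : 0 ≤ L) (hLip : ∀ x y, ‖h x - h y‖ ≤ L * ‖x - y‖)
    (hsupp : HasCompactSupport h) (hhcont : Continuous h)
    (xs : ℝ → EuclideanSpace ℝ (Fin d)) (hxs : Continuous xs)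
    (hxsbdd : ∃ M, ∀ t, ‖xs t‖ ≤ M)
    (G : ℝ → EuclideanSpace ℝ (Fin d)) (hGcont : Continuous G)
    (hG : ∃ Mg, ∀ t, Real.exp (η * t) * ‖G t‖ ≤ Mg)
    (φ : ℝ → EuclideanSpace ℝ (Fin d)) (hφm : Measurable φ)
    (hφbdd : ∃ Mφ, ∀ t, ‖φ t‖ ≤ Mφ) (hφ0 : ∀ t : ℝ, 0 < t → φ t = 0)
    (Λ : (ℝ → EuclideanSpace ℝ (Fin d)) → ℝ → EuclideanSpace ℝ (Fin d))
    (hΛ : ∀ z t, Λ z t =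
      (∫ τ in Set.Iic t, S (t - τ) (h (xs τ + z τ) - h (xs τ))) -
      (∫ τ in Set.Iic t, S (t - τ) (G τ + φ τ)) -
      (∫ τ in Set.Ici t, Ucu (t - τ) (h (xs τ + z τ) - h (xs τ))) +
      ∫ τ in Set.Ici t, Ucu (t - τ) (G τ + φ τ)) :
    (∀ z, ZmemS10 η z → ZmemS10 η (Λ z)) ∧
    ∃ C₁ : ℝ, 0 < C₁ ∧
      (∀ z₁ z₂, ZmemS10 η z₁ → ZmemS10 η z₂ →
        ∀ K : ℝ, (∀ t, Real.exp (η * t) * ‖z₁ t - z₂ t‖ ≤ K) →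
          ∀ t, Real.exp (η * t) * ‖Λ z₁ t - Λ z₂ t‖ ≤ C₁ * L * K) ∧
      (C₁ * L < 1 → ∃! z : ℝ → EuclideanSpace ℝ (Fin d),
        ZmemS10 η z ∧ ∀ t, z t = Λ z t) := by
  
  classical
  obtain ⟨Mg, hMg⟩ := hG
  obtain ⟨Mφ, hMφ⟩ := hφbdd
  have hMφ0 : 0 ≤ Mφ := le_trans (norm_nonneg _) (hMφ 0)
  have hexp1 : ∀ t : ℝ, exp (η * t) * exp (-(η * t)) = 1 := by
    intro t; rw [← exp_add]; simp
  -- translate sup bounds into pointwise exponential bounds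
  have weight_le : ∀ (u : ℝ → EuclideanSpace ℝ (Fin d)) (M : ℝ),
      (∀ t, exp (η * t) * ‖u t‖ ≤ M) → ∀ τ, ‖u τ‖ ≤ M * exp (-(η * τ)) := by
    intro u M hM τ
    have h1 := hM τ
    have h2 := exp_pos (η * τ)
    have h3 := exp_pos (-(η * τ))
    nlinarith [hexp1 τ, norm_nonneg (u τ)]
  -- bound for G + φ
  have hw2b : ∀ τ, ‖G τ + φ τ‖ ≤ (Mg + Mφ) * exp (-(η * τ)) := by
    intro τ
    have hGb : ‖G τ‖ ≤ Mg * exp (-(η * τ)) := weight_le G Mg hMg τ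
    have hφb : ‖φ τ‖ ≤ Mφ * exp (-(η * τ)) := by
      rcases le_or_gt τ 0 with hτ | hτ
      · have h1 : (1:ℝ) ≤ exp (-(η * τ)) := by
          rw [← exp_zero]; exact exp_le_exp.2 (by nlinarith)
        nlinarith [hMφ τ]
      · rw [hφ0 τ hτ]; simp; positivity
    calc ‖G τ + φ τ‖ ≤ ‖G τ‖ + ‖φ τ‖ := norm_add_le _ _
      _ ≤ (Mg + Mφ) * exp (-(η * τ)) := by rw [add_mul]; exact add_le_add hGb hφb
  have hw2m : AEStronglyMeasurable (fun τ => G τ + φ τ) (volume : Measure ℝ) :=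
    hGcont.aestronglyMeasurable.add hφm.aestronglyMeasurable
  -- bound and measurability for the h-difference along z
  have hwzm : ∀ z : ℝ → EuclideanSpace ℝ (Fin d), Continuous z →
      AEStronglyMeasurable (fun τ => h (xs τ + z τ) - h (xs τ)) (volume : Measure ℝ) :=
    fun z hz => ((hhcont.comp (hxs.add hz)).sub (hhcont.comp hxs)).aestronglyMeasurable
  have hwzb : ∀ (z : ℝ → EuclideanSpace ℝ (Fin d)) (M : ℝ),
      (∀ t, exp (η * t) * ‖z t‖ ≤ M) →
      ∀ τ, ‖h (xs τ + z τ) - h (xs τ)‖ ≤ (L * M) * exp (-(η * τ)) := by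
    intro z M hM τ
    have h1 : ‖h (xs τ + z τ) - h (xs τ)‖ ≤ L * ‖z τ‖ := by
      simpa [add_sub_cancel_left] using hLip (xs τ + z τ) (xs τ)
    have h2 : ‖z τ‖ ≤ M * exp (-(η * τ)) := weight_le z M hM τ
    calc ‖h (xs τ + z τ) - h (xs τ)‖ ≤ L * (M * exp (-(η * τ))) :=
          le_trans h1 (mul_le_mul_of_nonneg_left h2 hL)
      _ = (L * M) * exp (-(η * τ)) := by ring
  -- Part 1
  have part1 : ∀ z, ZmemS10 η z → ZmemS10 η (Λ z) := by
    rintro z ⟨hzc, Mz, hMz⟩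
    have hw1m := hwzm z hzc
    have hw1b := hwzb z Mz hMz
    constructor
    · rw [funext (hΛ z)]
      exact (((contS10 hη hηβ hCε hScont hS hw1m hw1b).sub
        (contS10 hη hηβ hCε hScont hS hw2m hw2b)).sub
        (contU10 hε hεη hηβ hCε hUcont hU hw1m hw1b)).add
        (contU10 hε hεη hηβ hCε hUcont hU hw2m hw2b)
    · refine ⟨Cε * (L * Mz) / (β - ε - η) + Cε * (Mg + Mφ) / (β - ε - η)
        + Cε * (L * Mz) * (1 / (β - ε + η) + 1 / (η - ε))
        + Cε * (Mg + Mφ) * (1 / (β - ε + η) + 1 / (η - ε)), ?_⟩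
      intro t
      rw [hΛ z t]
      have n1 := (Spart10 hηβ hCε hScont hS hw1m hw1b t).2
      have n2 := (Spart10 hηβ hCε hScont hS hw2m hw2b t).2
      have n3 := (Upart10 hε hεη hηβ hCε hUcont hU hw1m hw1b t).2
      have n4 := (Upart10 hε hεη hηβ hCε hUcont hU hw2m hw2b t).2
      set A := ∫ τ in Iic t, S (t - τ) (h (xs τ + z τ) - h (xs τ)) with hA
      set B := ∫ τ in Iic t, S (t - τ) (G τ + φ τ) with hB
      set Cc := ∫ τ in Ici t, Ucu (t - τ) (h (xs τ + z τ) - h (xs τ)) with hCc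
      set D := ∫ τ in Ici t, Ucu (t - τ) (G τ + φ τ) with hD
      have htri : ‖A - B - Cc + D‖ ≤ ‖A‖ + ‖B‖ + ‖Cc‖ + ‖D‖ :=
        calc ‖A - B - Cc + D‖ ≤ ‖A - B - Cc‖ + ‖D‖ := norm_add_le _ _
          _ ≤ ‖A - B‖ + ‖Cc‖ + ‖D‖ := by linarith [norm_sub_le (A - B) Cc]
          _ ≤ ‖A‖ + ‖B‖ + ‖Cc‖ + ‖D‖ := by linarith [norm_sub_le A B]
      set c1 := Cε * (L * Mz) / (β - ε - η)
      set c2 := Cε * (Mg + Mφ) / (β - ε - η)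
      set c3 := Cε * (L * Mz) * (1 / (β - ε + η) + 1 / (η - ε))
      set c4 := Cε * (Mg + Mφ) * (1 / (β - ε + η) + 1 / (η - ε))
      calc exp (η * t) * ‖A - B - Cc + D‖
          ≤ exp (η * t) * ((c1 + c2 + c3 + c4) * exp (-(η * t))) := by
            apply mul_le_mul_of_nonneg_left _ (exp_pos _).le
            calc ‖A - B - Cc + D‖ ≤ ‖A‖ + ‖B‖ + ‖Cc‖ + ‖D‖ := htri
              _ ≤ c1 * exp (-(η * t)) + c2 * exp (-(η * t))
                  + c3 * exp (-(η * t)) + c4 * exp (-(η * t)) := by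
                  linarith [n1, n2, n3, n4]
              _ = (c1 + c2 + c3 + c4) * exp (-(η * t)) := by ring
        _ = (c1 + c2 + c3 + c4) * (exp (η * t) * exp (-(η * t))) := by ring
        _ = c1 + c2 + c3 + c4 := by rw [hexp1 t, mul_one]
  refine ⟨part1, Cε * (1 / (β - ε - η) + (1 / (β - ε + η) + 1 / (η - ε))), ?_, ?_⟩
  · apply mul_pos hCε
    have h1 : 0 < β - ε - η := by linarith
    have h2 : 0 < β - ε + η := by linarith
    have h3 : 0 < η - ε := by linarith
    positivity
  set C₁ := Cε * (1 / (β - ε - η) + (1 / (β - ε + η) + 1 / (η - ε))) with hC₁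
  have hC₁pos : 0 < C₁ := by
    apply mul_pos hCε
    have h1 : 0 < β - ε - η := by linarith
    have h2 : 0 < β - ε + η := by linarith
    have h3 : 0 < η - ε := by linarith
    positivity
  have lip : ∀ z₁ z₂, ZmemS10 η z₁ → ZmemS10 η z₂ →
      ∀ K : ℝ, (∀ t, exp (η * t) * ‖z₁ t - z₂ t‖ ≤ K) →
      ∀ t, exp (η * t) * ‖Λ z₁ t - Λ z₂ t‖ ≤ C₁ * L * K := by
    rintro z₁ z₂ ⟨hz₁c, M₁, hM₁⟩ ⟨hz₂c, M₂, hM₂⟩ K hK t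
    set w : ℝ → EuclideanSpace ℝ (Fin d) :=
      fun τ => h (xs τ + z₁ τ) - h (xs τ + z₂ τ) with hw
    have hwm : AEStronglyMeasurable w (volume : Measure ℝ) :=
      ((hhcont.comp (hxs.add hz₁c)).sub (hhcont.comp (hxs.add hz₂c))).aestronglyMeasurable
    have hwb : ∀ τ, ‖w τ‖ ≤ (L * K) * exp (-(η * τ)) := by
      intro τ
      have h1 : ‖w τ‖ ≤ L * ‖z₁ τ - z₂ τ‖ := by
        simpa [hw, add_sub_add_left_eq_sub] using hLip (xs τ + z₁ τ) (xs τ + z₂ τ)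
      have h2 : ‖z₁ τ - z₂ τ‖ ≤ K * exp (-(η * τ)) :=
        weight_le (fun s => z₁ s - z₂ s) K hK τ
      calc ‖w τ‖ ≤ L * (K * exp (-(η * τ))) :=
            le_trans h1 (mul_le_mul_of_nonneg_left h2 hL)
        _ = (L * K) * exp (-(η * τ)) := by ring
    have int1S := (Spart10 hηβ hCε hScont hS (hwzm z₁ hz₁c) (hwzb z₁ M₁ hM₁) t).1
    have int2S := (Spart10 hηβ hCε hScont hS (hwzm z₂ hz₂c) (hwzb z₂ M₂ hM₂) t).1
    have int1U := (Upart10 hε hεη hηβ hCε hUcont hU (hwzm z₁ hz₁c) (hwzb z₁ M₁ hM₁) t).1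
    have int2U := (Upart10 hε hεη hηβ hCε hUcont hU (hwzm z₂ hz₂c) (hwzb z₂ M₂ hM₂) t).1
    have intwS := Spart10 hηβ hCε hScont hS hwm hwb t
    have intwU := Upart10 hε hεη hηβ hCε hUcont hU hwm hwb t
    have key : Λ z₁ t - Λ z₂ t
        = (∫ τ in Iic t, S (t - τ) (w τ)) - ∫ τ in Ici t, Ucu (t - τ) (w τ) := by
      rw [hΛ z₁ t, hΛ z₂ t]
      have e1 : (∫ τ in Iic t, S (t - τ) (h (xs τ + z₁ τ) - h (xs τ)))
          - (∫ τ in Iic t, S (t - τ) (h (xs τ + z₂ τ) - h (xs τ)))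
          = ∫ τ in Iic t, S (t - τ) (w τ) := by
        rw [← integral_sub int1S int2S]
        apply setIntegral_congr_fun measurableSet_Iic
        intro τ _
        show S (t - τ) (h (xs τ + z₁ τ) - h (xs τ))
            - S (t - τ) (h (xs τ + z₂ τ) - h (xs τ)) = S (t - τ) (w τ)
        rw [← map_sub]
        congr 1
        simp only [hw]; abel
      have e2 : (∫ τ in Ici t, Ucu (t - τ) (h (xs τ + z₁ τ) - h (xs τ)))
          - (∫ τ in Ici t, Ucu (t - τ) (h (xs τ + z₂ τ) - h (xs τ)))
          = ∫ τ in Ici t, Ucu (t - τ) (w τ) := by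
        rw [← integral_sub int1U int2U]
        apply setIntegral_congr_fun measurableSet_Ici
        intro τ _
        show Ucu (t - τ) (h (xs τ + z₁ τ) - h (xs τ))
            - Ucu (t - τ) (h (xs τ + z₂ τ) - h (xs τ)) = Ucu (t - τ) (w τ)
        rw [← map_sub]
        congr 1
        simp only [hw]; abel
      rw [← e1, ← e2]; abel
    rw [key]
    have hb : ‖(∫ τ in Iic t, S (t - τ) (w τ)) - ∫ τ in Ici t, Ucu (t - τ) (w τ)‖
        ≤ (Cε * (L * K) / (β - ε - η)
            + Cε * (L * K) * (1 / (β - ε + η) + 1 / (η - ε))) * exp (-(η * t)) := by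
      calc ‖(∫ τ in Iic t, S (t - τ) (w τ)) - ∫ τ in Ici t, Ucu (t - τ) (w τ)‖
          ≤ ‖∫ τ in Iic t, S (t - τ) (w τ)‖ + ‖∫ τ in Ici t, Ucu (t - τ) (w τ)‖ :=
            norm_sub_le _ _
        _ ≤ Cε * (L * K) / (β - ε - η) * exp (-(η * t))
            + Cε * (L * K) * (1 / (β - ε + η) + 1 / (η - ε)) * exp (-(η * t)) :=
            add_le_add intwS.2 intwU.2
        _ = _ := by ring
    calc exp (η * t) * ‖(∫ τ in Iic t, S (t - τ) (w τ)) - ∫ τ in Ici t, Ucu (t - τ) (w τ)‖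
        ≤ exp (η * t) * ((Cε * (L * K) / (β - ε - η)
            + Cε * (L * K) * (1 / (β - ε + η) + 1 / (η - ε))) * exp (-(η * t))) :=
          mul_le_mul_of_nonneg_left hb (exp_pos _).le
      _ = (Cε * (L * K) / (β - ε - η)
            + Cε * (L * K) * (1 / (β - ε + η) + 1 / (η - ε)))
          * (exp (η * t) * exp (-(η * t))) := by ring
      _ = C₁ * L * K := by rw [hexp1 t, mul_one, hC₁]; ring
  refine ⟨lip, ?_⟩
  intro hcontr
  have hC₁L0 : 0 ≤ C₁ * L := mul_nonneg hC₁pos.le hL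
  -- the transported map on bounded continuous functions
  set zf : BoundedContinuousFunction ℝ (EuclideanSpace ℝ (Fin d)) →
      ℝ → EuclideanSpace ℝ (Fin d) := fun u t => exp (-(η * t)) • u t with hzf_def
  have hzfmem : ∀ u, ZmemS10 η (zf u) := by
    intro u
    refine ⟨((continuous_const.mul continuous_id).neg.rexp).smul u.continuous, ‖u‖, ?_⟩
    intro t
    rw [hzf_def]
    simp only
    rw [norm_smul, Real.norm_eq_abs, abs_of_pos (exp_pos _), ← mul_assoc, hexp1 t, one_mul]
    exact u.norm_coe_le_norm t
  have himg : ∀ u, ∃ M : ℝ, ∀ t, ‖exp (η * t) • Λ (zf u) t‖ ≤ M := by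
    intro u
    obtain ⟨_, M, hM⟩ := part1 _ (hzfmem u)
    refine ⟨M, fun t => ?_⟩
    rw [norm_smul, Real.norm_eq_abs, abs_of_pos (exp_pos _)]
    exact hM t
  choose Mf hMf using himg
  have hcontT : ∀ u, Continuous fun t => exp (η * t) • Λ (zf u) t := by
    intro u
    exact ((continuous_const.mul continuous_id).rexp).smul (part1 _ (hzfmem u)).1
  set T : BoundedContinuousFunction ℝ (EuclideanSpace ℝ (Fin d)) →
      BoundedContinuousFunction ℝ (EuclideanSpace ℝ (Fin d)) :=
    fun u => BoundedContinuousFunction.ofNormedAddCommGroup _ (hcontT u) (Mf u) (hMf u)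
    with hT_def
  have hTapp : ∀ u t, T u t = exp (η * t) • Λ (zf u) t := fun u t => rfl
  have hlipT : LipschitzWith (Real.toNNReal (C₁ * L)) T := by
    apply LipschitzWith.of_dist_le_mul
    intro u₁ u₂
    rw [Real.coe_toNNReal _ hC₁L0]
    rw [BoundedContinuousFunction.dist_le (mul_nonneg hC₁L0 dist_nonneg)]
    intro t
    have hKd : ∀ s, exp (η * s) * ‖zf u₁ s - zf u₂ s‖ ≤ dist u₁ u₂ := by
      intro s
      have hs : zf u₁ s - zf u₂ s = exp (-(η * s)) • (u₁ s - u₂ s) := by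
        rw [hzf_def]; simp only [smul_sub]
      rw [hs, norm_smul, Real.norm_eq_abs, abs_of_pos (exp_pos _), ← mul_assoc,
        hexp1 s, one_mul]
      calc ‖u₁ s - u₂ s‖ = dist (u₁ s) (u₂ s) := (dist_eq_norm _ _).symm
        _ ≤ dist u₁ u₂ := BoundedContinuousFunction.dist_coe_le_dist s
    have hl := lip (zf u₁) (zf u₂) (hzfmem u₁) (hzfmem u₂) (dist u₁ u₂) hKd t
    rw [dist_eq_norm]
    have hs : T u₁ t - T u₂ t = exp (η * t) • (Λ (zf u₁) t - Λ (zf u₂) t) := by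
      rw [hTapp, hTapp, smul_sub]
    rw [hs, norm_smul, Real.norm_eq_abs, abs_of_pos (exp_pos _)]
    exact hl
  have hcontract : ContractingWith (Real.toNNReal (C₁ * L)) T :=
    ⟨by rw [← NNReal.coe_lt_coe, Real.coe_toNNReal _ hC₁L0]; exact_mod_cast hcontr, hlipT⟩
  set u₀ := ContractingWith.fixedPoint T hcontract with hu₀_def
  have hu₀ : T u₀ = u₀ := hcontract.fixedPoint_isFixedPt
  set z₀ := zf u₀ with hz₀_def
  have hz₀mem : ZmemS10 η z₀ := hzfmem u₀
  have hz₀fix : ∀ t, z₀ t = Λ z₀ t := by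
    intro t
    have h1 : u₀ t = exp (η * t) • Λ z₀ t := by
      conv_lhs => rw [← hu₀]
      exact hTapp u₀ t
    have h2 : z₀ t = exp (-(η * t)) • u₀ t := rfl
    rw [h2, h1, smul_smul, ← exp_add]
    simp
  -- uniqueness
  have uniq : ∀ y, (ZmemS10 η y ∧ ∀ t, y t = Λ y t) → y = z₀ := by
    rintro y ⟨hy, hfy⟩
    obtain ⟨My, hMy⟩ := hy.2
    obtain ⟨Mz', hMz'⟩ := hz₀mem.2
    have hstep : ∀ n : ℕ, ∀ t, exp (η * t) * ‖y t - z₀ t‖ ≤ (C₁ * L) ^ n * (My + Mz') := by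
      intro n
      induction n with
      | zero =>
        intro t
        simp only [pow_zero, one_mul]
        calc exp (η * t) * ‖y t - z₀ t‖ ≤ exp (η * t) * (‖y t‖ + ‖z₀ t‖) :=
              mul_le_mul_of_nonneg_left (norm_sub_le _ _) (exp_pos _).le
          _ = exp (η * t) * ‖y t‖ + exp (η * t) * ‖z₀ t‖ := by ring
          _ ≤ My + Mz' := add_le_add (hMy t) (hMz' t)
      | succ n ih =>
        intro t
        have hl := lip y z₀ hy hz₀mem ((C₁ * L) ^ n * (My + Mz')) ih t
        rw [← hfy t, ← hz₀fix t] at hl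
        calc exp (η * t) * ‖y t - z₀ t‖ ≤ C₁ * L * ((C₁ * L) ^ n * (My + Mz')) := hl
          _ = (C₁ * L) ^ (n + 1) * (My + Mz') := by ring
    funext t
    have htend : Tendsto (fun n : ℕ => (C₁ * L) ^ n * (My + Mz')) atTop (nhds 0) := by
      simpa using (tendsto_pow_atTop_nhds_zero_of_lt_one hC₁L0 hcontr).mul_const (My + Mz')
    have h0 : exp (η * t) * ‖y t - z₀ t‖ ≤ 0 :=
      ge_of_tendsto' htend (fun n => hstep n t)
    have h1 : ‖y t - z₀ t‖ ≤ 0 := by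
      nlinarith [exp_pos (η * t), norm_nonneg (y t - z₀ t)]
    have h2 : y t - z₀ t = 0 := norm_le_zero_iff.mp h1
    exact sub_eq_zero.mp h2
  exact ⟨z₀, ⟨hz₀mem, hz₀fix⟩, uniq⟩
end

section
/- Let q(t) be a k-parabolic solution, i.e. for i ≠ j in k, C₁t^{2/3} ≤ r_{ij}(t) ≤ C₂t^{2/3}, and for i ∈ k, j ∉ k, r_{ij}(t) ≥ C₃t. Let z_i = q_i - c_k denote positions relative to the k-subsystem's center of mass. Then for each i ∈ k, m_i z̈_i = ∂U_k/∂z_i + γ_i(t) with |γ_i(t)| = O(t^{-7/3}) as t → ∞. -/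
open Filter Real

private lemma key_ineq {E : Type*} [NormedAddCommGroup E] [NormedSpace ℝ E]
    (a b : E) (R : ℝ) (hR : 0 < R) (ha : R ≤ ‖a‖) (hb : R ≤ ‖b‖) :
    ‖(‖a‖ ^ 3)⁻¹ • a - (‖b‖ ^ 3)⁻¹ • b‖ ≤ 4 * ‖a - b‖ / R ^ 3 := by
  have ha0 : 0 < ‖a‖ := hR.trans_le ha
  have hb0 : 0 < ‖b‖ := hR.trans_le hb
  have hd : |‖b‖ - ‖a‖| ≤ ‖a - b‖ :=
    (abs_norm_sub_norm_le b a).trans (le_of_eq (norm_sub_rev b a))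
  have hsplit : (‖a‖ ^ 3)⁻¹ • a - (‖b‖ ^ 3)⁻¹ • b
      = (‖a‖ ^ 3)⁻¹ • (a - b) + ((‖a‖ ^ 3)⁻¹ - (‖b‖ ^ 3)⁻¹) • b := by
    rw [smul_sub, sub_smul]; abel
  rw [hsplit]
  refine (norm_add_le _ _).trans ?_
  rw [norm_smul, norm_smul, Real.norm_eq_abs, Real.norm_eq_abs,
    abs_of_pos (by positivity : (0:ℝ) < (‖a‖ ^ 3)⁻¹)]
  set α := ‖a‖; set β := ‖b‖; set d := ‖a - b‖
  have hd0 : 0 ≤ d := norm_nonneg _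
  have h1 : (α ^ 3)⁻¹ * d ≤ d / R ^ 3 := by
    rw [inv_mul_eq_div]
    gcongr
  have habs : |(α ^ 3)⁻¹ - (β ^ 3)⁻¹| = |β ^ 3 - α ^ 3| / (α ^ 3 * β ^ 3) := by
    have hid : (α ^ 3)⁻¹ - (β ^ 3)⁻¹ = (β ^ 3 - α ^ 3) / (α ^ 3 * β ^ 3) := by
      field_simp
    rw [hid, abs_div, abs_of_pos (by positivity : (0:ℝ) < α ^ 3 * β ^ 3)]
  have hfac : |β ^ 3 - α ^ 3| ≤ d * (β ^ 2 + β * α + α ^ 2) := by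
    have : β ^ 3 - α ^ 3 = (β - α) * (β ^ 2 + β * α + α ^ 2) := by ring
    rw [this, abs_mul, abs_of_pos (by positivity : (0:ℝ) < β ^ 2 + β * α + α ^ 2)]
    exact mul_le_mul_of_nonneg_right hd (by positivity)
  have h2 : |(α ^ 3)⁻¹ - (β ^ 3)⁻¹| * β ≤ 3 * d / R ^ 3 := by
    rw [habs, div_mul_eq_mul_div, div_le_div_iff₀ (by positivity) (by positivity)]
    have key : |β ^ 3 - α ^ 3| * β * R ^ 3 ≤ d * (β ^ 2 + β * α + α ^ 2) * β * R ^ 3 := by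
      gcongr
    refine key.trans ?_
    have h3 : R ^ 3 ≤ α * β ^ 2 := by
      calc R ^ 3 = R * R ^ 2 := by ring
        _ ≤ α * β ^ 2 := mul_le_mul ha (pow_le_pow_left₀ hR.le hb 2) (by positivity) ha0.le
    have h4 : R ^ 3 ≤ α ^ 2 * β := by
      calc R ^ 3 = R ^ 2 * R := by ring
        _ ≤ α ^ 2 * β := mul_le_mul (pow_le_pow_left₀ hR.le ha 2) hb hR.le (by positivity)
    have h5 : R ^ 3 ≤ α ^ 3 := pow_le_pow_left₀ hR.le ha 3
    nlinarith [mul_nonneg hd0 (mul_nonneg (sq_nonneg β) hb0.le),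
      mul_nonneg hd0 (mul_nonneg (mul_nonneg hb0.le ha0.le) hb0.le),
      mul_nonneg (mul_nonneg hd0 (sq_nonneg α)) hb0.le,
      mul_le_mul_of_nonneg_left h3 (mul_nonneg hd0 (mul_nonneg hb0.le hb0.le)),
      mul_le_mul_of_nonneg_left h4 (mul_nonneg hd0 (mul_nonneg hb0.le hb0.le)),
      mul_le_mul_of_nonneg_left h5 (mul_nonneg hd0 (mul_nonneg hb0.le hb0.le))]
  calc (α ^ 3)⁻¹ * d + |(α ^ 3)⁻¹ - (β ^ 3)⁻¹| * β
      ≤ d / R ^ 3 + 3 * d / R ^ 3 := add_le_add h1 h2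
    _ = 4 * d / R ^ 3 := by ring

/-- for a k-parabolic solution of the planar n-body problem, the relative
positions `z_i = q_i - c_k` of the subsystem satisfy
`m_i z̈_i = ∂U_k/∂z_i + γ_i(t)` with `|γ_i(t)| = O(t^{-7/3})`. -/
theorem stmt_14 (n : ℕ) (m : Fin n → ℝ) (hm : ∀ i, 0 < m i)
    (q : ℝ → Fin n → EuclideanSpace ℝ (Fin 2))
    (hsmooth : ∀ i, ContDiff ℝ 2 (fun t => q t i))
    (hnewton : ∀ i, ∀ t : ℝ,
      m i • deriv (deriv (fun τ => q τ i)) t =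
        ∑ j ∈ Finset.univ.erase i, (m i * m j / ‖q t j - q t i‖ ^ 3) • (q t j - q t i))
    (s : Finset (Fin n)) (hs : 2 ≤ s.card)
    (C₁ C₂ C₃ T₀ : ℝ) (hC₁ : 0 < C₁) (hC₂ : 0 < C₂) (hC₃ : 0 < C₃) (hT₀ : 0 < T₀)
    (hpara₁ : ∀ i ∈ s, ∀ j ∈ s, i ≠ j → ∀ t, T₀ ≤ t →
      C₁ * t ^ ((2 : ℝ) / 3) ≤ ‖q t i - q t j‖ ∧ ‖q t i - q t j‖ ≤ C₂ * t ^ ((2 : ℝ) / 3))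
    (hpara₂ : ∀ i ∈ s, ∀ j ∉ s, ∀ t, T₀ ≤ t → C₃ * t ≤ ‖q t i - q t j‖) :
    let cm : ℝ → EuclideanSpace ℝ (Fin 2) :=
      fun t => (∑ i ∈ s, m i)⁻¹ • ∑ i ∈ s, m i • q t i
    let z : Fin n → ℝ → EuclideanSpace ℝ (Fin 2) := fun i t => q t i - cm t
    ∀ i ∈ s, ∃ γ : ℝ → EuclideanSpace ℝ (Fin 2), ∃ C T : ℝ, 0 < C ∧ T₀ ≤ T ∧
      ∀ t, T ≤ t →
        (m i • deriv (deriv (z i)) t =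
          (∑ j ∈ s.erase i, (m i * m j / ‖z j t - z i t‖ ^ 3) • (z j t - z i t)) + γ t) ∧
        ‖γ t‖ ≤ C * t ^ (-(7 : ℝ) / 3) := by
  intro cm z i hi
  classical
  set M : ℝ := ∑ l ∈ s, m l with hMdef
  have hs0 : s.Nonempty := Finset.card_pos.mp (by omega)
  have hM : 0 < M := Finset.sum_pos (fun l _ => hm l) hs0
  -- differentiability facts
  have hQd : ∀ l, Differentiable ℝ (fun τ => q τ l) := fun l =>
    (hsmooth l).differentiable (by norm_num)
  have hQ1 : ∀ l, ContDiff ℝ 1 (deriv (fun τ => q τ l)) := by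
    intro l
    have h := hsmooth l
    rw [show (2 : WithTop ℕ∞) = 1 + 1 from rfl] at h
    exact (contDiff_succ_iff_deriv.mp h).2.2
  have hQd' : ∀ l, Differentiable ℝ (deriv (fun τ => q τ l)) := fun l =>
    (hQ1 l).differentiable (by norm_num)
  -- second derivative of z i
  have hzi : z i = fun τ => q τ i - M⁻¹ • ∑ l ∈ s, m l • q τ l := rfl
  have hd2 : ∀ t, deriv (deriv (z i)) t
      = deriv (deriv (fun τ => q τ i)) t
        - M⁻¹ • ∑ l ∈ s, m l • deriv (deriv (fun τ => q τ l)) t := by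
    intro t
    rw [hzi]
    have hd1 : deriv (fun τ => q τ i - M⁻¹ • ∑ l ∈ s, m l • q τ l)
        = fun τ => deriv (fun τ => q τ i) τ - M⁻¹ • ∑ l ∈ s, m l • deriv (fun τ => q τ l) τ := by
      funext τ
      have hsum : DifferentiableAt ℝ (fun τ => ∑ l ∈ s, m l • q τ l) τ :=
        DifferentiableAt.fun_sum (fun l _ => ((hQd l) τ).const_smul (m l))
      rw [deriv_fun_sub ((hQd i) τ) (hsum.fun_const_smul M⁻¹), deriv_fun_const_smul M⁻¹ hsum,
        deriv_fun_sum (fun l _ => ((hQd l) τ).fun_const_smul (m l))]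
      congr 2
      exact Finset.sum_congr rfl fun l _ => deriv_fun_const_smul (m l) ((hQd l) τ)
    rw [hd1]
    have hsum' : DifferentiableAt ℝ (fun τ => ∑ l ∈ s, m l • deriv (fun τ => q τ l) τ) t :=
      DifferentiableAt.fun_sum (fun l _ => ((hQd' l) t).const_smul (m l))
    rw [deriv_fun_sub ((hQd' i) t) (hsum'.fun_const_smul M⁻¹), deriv_fun_const_smul M⁻¹ hsum',
      deriv_fun_sum (fun l _ => ((hQd' l) t).fun_const_smul (m l))]
    congr 2
    exact Finset.sum_congr rfl fun l _ => deriv_fun_const_smul (m l) ((hQd' l) t)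
  refine ⟨fun t => m i • deriv (deriv (z i)) t
      - ∑ j ∈ s.erase i, (m i * m j / ‖z j t - z i t‖ ^ 3) • (z j t - z i t),
    m i * (∑ j ∈ sᶜ, m j) * (4 * C₂ / C₃ ^ 3) + 1, T₀, ?_, le_rfl, fun t ht => ⟨(add_sub_cancel _ _).symm, ?_⟩⟩
  · have h0 : (0:ℝ) ≤ m i * (∑ j ∈ sᶜ, m j) * (4 * C₂ / C₃ ^ 3) :=
      mul_nonneg (mul_nonneg (hm i).le (Finset.sum_nonneg fun j _ => (hm j).le)) (by positivity)
    linarith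
  -- the norm bound
  have ht0 : (0:ℝ) < t := hT₀.trans_le ht
  have hpow : (0:ℝ) < t ^ (-(7:ℝ)/3) := Real.rpow_pos_of_pos ht0 _
  -- abbreviations at time t
  set Gt : Fin n → Fin n → EuclideanSpace ℝ (Fin 2) :=
    fun l j => (m j / ‖q t j - q t l‖ ^ 3) • (q t j - q t l) with hGt
  have hF : ∀ l j : Fin n, (m l * m j / ‖q t j - q t l‖ ^ 3) • (q t j - q t l) = m l • Gt l j := by
    intro l j
    rw [hGt, smul_smul, mul_div_assoc]
  -- splitting the external sum
  have hsplit : ∀ l ∈ s,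
      ∑ j ∈ Finset.univ.erase l, (m l * m j / ‖q t j - q t l‖ ^ 3) • (q t j - q t l)
        = (∑ j ∈ s.erase l, (m l * m j / ‖q t j - q t l‖ ^ 3) • (q t j - q t l))
          + ∑ j ∈ sᶜ, (m l * m j / ‖q t j - q t l‖ ^ 3) • (q t j - q t l) := by
    intro l hl
    have hset : Finset.univ.erase l = (s.erase l) ∪ sᶜ := by
      ext j
      simp only [Finset.mem_erase, Finset.mem_union, Finset.mem_compl, Finset.mem_univ, and_true]
      constructor
      · intro hj
        by_cases hjs : j ∈ s
        · exact Or.inl ⟨hj, hjs⟩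
        · exact Or.inr hjs
      · rintro (⟨hj, _⟩ | hj)
        · exact hj
        · rintro rfl; exact hj hl
    rw [hset, Finset.sum_union
      (Finset.disjoint_left.mpr fun j hj hj' =>
        (Finset.mem_compl.mp hj') (Finset.mem_of_mem_erase hj))]
  -- antisymmetry and cancellation of internal forces
  have hanti : ∀ l j : Fin n,
      (m l * m j / ‖q t j - q t l‖ ^ 3) • (q t j - q t l)
        + (m j * m l / ‖q t l - q t j‖ ^ 3) • (q t l - q t j) = 0 := by
    intro l j
    rw [norm_sub_rev, mul_comm (m j),
      show q t l - q t j = -(q t j - q t l) from (neg_sub _ _).symm, smul_neg]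
    exact add_neg_cancel _
  have hzero : ∑ l ∈ s, ∑ j ∈ s.erase l,
      (m l * m j / ‖q t j - q t l‖ ^ 3) • (q t j - q t l) = 0 := by
    have hswap : ∑ l ∈ s, ∑ j ∈ s.erase l,
        (m l * m j / ‖q t j - q t l‖ ^ 3) • (q t j - q t l)
        = ∑ j ∈ s, ∑ l ∈ s.erase j,
          (m l * m j / ‖q t j - q t l‖ ^ 3) • (q t j - q t l) := by
      refine Finset.sum_comm' ?_
      intro x y
      simp only [Finset.mem_erase]
      tauto
    have hdouble : (∑ l ∈ s, ∑ j ∈ s.erase l,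
        (m l * m j / ‖q t j - q t l‖ ^ 3) • (q t j - q t l))
        + ∑ l ∈ s, ∑ j ∈ s.erase l,
          (m l * m j / ‖q t j - q t l‖ ^ 3) • (q t j - q t l) = 0 := by
      nth_rewrite 2 [hswap]
      rw [← Finset.sum_add_distrib]
      refine Finset.sum_eq_zero fun l _ => ?_
      rw [← Finset.sum_add_distrib]
      exact Finset.sum_eq_zero fun j _ => hanti l j
    have h2S : (2:ℝ) • (∑ l ∈ s, ∑ j ∈ s.erase l,
        (m l * m j / ‖q t j - q t l‖ ^ 3) • (q t j - q t l)) = 0 := by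
      rw [two_smul]; exact hdouble
    simpa using (smul_eq_zero.mp h2S).resolve_left (by norm_num)
  -- the key identity for γ
  have h1 : ∀ j, z j t - z i t = q t j - q t i := fun j => sub_sub_sub_cancel_right _ _ _
  have hγeq : m i • deriv (deriv (z i)) t
      - (∑ j ∈ s.erase i, (m i * m j / ‖z j t - z i t‖ ^ 3) • (z j t - z i t))
      = (m i * M⁻¹) • ∑ j ∈ sᶜ, ∑ l ∈ s, m l • (Gt i j - Gt l j) := by
    have step1 : m i • deriv (deriv (z i)) t
        = (∑ j ∈ sᶜ, (m i * m j / ‖q t j - q t i‖ ^ 3) • (q t j - q t i))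
          + (∑ j ∈ s.erase i, (m i * m j / ‖q t j - q t i‖ ^ 3) • (q t j - q t i))
          - m i • (M⁻¹ • ∑ l ∈ s, ∑ j ∈ sᶜ,
              (m l * m j / ‖q t j - q t l‖ ^ 3) • (q t j - q t l)) := by
      rw [hd2 t, smul_sub, hnewton i t, hsplit i hi]
      have hinner : ∑ l ∈ s, m l • deriv (deriv (fun τ => q τ l)) t
          = ∑ l ∈ s, ∑ j ∈ sᶜ, (m l * m j / ‖q t j - q t l‖ ^ 3) • (q t j - q t l) := by
        rw [show ∑ l ∈ s, m l • deriv (deriv (fun τ => q τ l)) t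
            = ∑ l ∈ s, ∑ j ∈ Finset.univ.erase l,
              (m l * m j / ‖q t j - q t l‖ ^ 3) • (q t j - q t l)
          from Finset.sum_congr rfl fun l _ => hnewton l t]
        rw [show ∑ l ∈ s, ∑ j ∈ Finset.univ.erase l,
              (m l * m j / ‖q t j - q t l‖ ^ 3) • (q t j - q t l)
            = ∑ l ∈ s, ((∑ j ∈ s.erase l, (m l * m j / ‖q t j - q t l‖ ^ 3) • (q t j - q t l))
              + ∑ j ∈ sᶜ, (m l * m j / ‖q t j - q t l‖ ^ 3) • (q t j - q t l))
          from Finset.sum_congr rfl fun l hl => hsplit l hl]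
        rw [Finset.sum_add_distrib, hzero, zero_add]
      rw [hinner, smul_smul]
      abel
    simp only [h1]
    rw [step1]
    have hRHS : (m i * M⁻¹) • ∑ j ∈ sᶜ, ∑ l ∈ s, m l • (Gt i j - Gt l j)
        = (∑ j ∈ sᶜ, (m i * m j / ‖q t j - q t i‖ ^ 3) • (q t j - q t i))
          - m i • (M⁻¹ • ∑ l ∈ s, ∑ j ∈ sᶜ,
              (m l * m j / ‖q t j - q t l‖ ^ 3) • (q t j - q t l)) := by
      have e1 : ∀ j : Fin n, ∑ l ∈ s, m l • (Gt i j - Gt l j)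
          = M • Gt i j - ∑ l ∈ s, m l • Gt l j := by
        intro j
        rw [hMdef]
        simp only [smul_sub, Finset.sum_sub_distrib, Finset.sum_smul]
      have e2 : ∑ j ∈ sᶜ, ∑ l ∈ s, m l • (Gt i j - Gt l j)
          = M • (∑ j ∈ sᶜ, Gt i j) - ∑ j ∈ sᶜ, ∑ l ∈ s, m l • Gt l j := by
        simp only [e1, Finset.sum_sub_distrib, Finset.smul_sum]
      rw [e2, smul_sub, smul_smul]
      congr 1
      · rw [show m i * M⁻¹ * M = m i by field_simp, Finset.smul_sum]
        exact Finset.sum_congr rfl fun j _ => (hF i j).symm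
      · rw [← smul_smul]
        congr 1
        rw [Finset.sum_comm]
        congr 1
        exact Finset.sum_congr rfl fun l _ => Finset.sum_congr rfl fun j _ => (hF l j).symm
    rw [hRHS]
    abel
  beta_reduce
  rw [hγeq]
  -- now the estimate
  have hterm : ∀ j ∈ sᶜ, ∀ l ∈ s, ‖m l • (Gt i j - Gt l j)‖
      ≤ m l * (m j * ((4 * C₂ / C₃ ^ 3) * t ^ (-(7:ℝ)/3))) := by
    intro j hj l hl
    have hj' : j ∉ s := Finset.mem_compl.mp hj
    by_cases hli : l = i
    · subst hli
      simp only [sub_self, smul_zero, norm_zero]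
      exact mul_nonneg (hm l).le (mul_nonneg (hm j).le
        (mul_nonneg (div_nonneg (by linarith) (pow_nonneg hC₃.le 3)) hpow.le))
    · rw [norm_smul, Real.norm_eq_abs, abs_of_pos (hm l)]
      refine mul_le_mul_of_nonneg_left ?_ (hm l).le
      have hGdiff : Gt i j - Gt l j
          = m j • ((‖q t j - q t i‖ ^ 3)⁻¹ • (q t j - q t i)
            - (‖q t j - q t l‖ ^ 3)⁻¹ • (q t j - q t l)) := by
        rw [hGt, smul_sub]
        simp only [smul_smul, div_eq_mul_inv]
      rw [hGdiff, norm_smul, Real.norm_eq_abs, abs_of_pos (hm j)]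
      refine mul_le_mul_of_nonneg_left ?_ (hm j).le
      have hR : (0:ℝ) < C₃ * t := by positivity
      have ha : C₃ * t ≤ ‖q t j - q t i‖ := by
        rw [norm_sub_rev]; exact hpara₂ i hi j hj' t ht
      have hb : C₃ * t ≤ ‖q t j - q t l‖ := by
        rw [norm_sub_rev]; exact hpara₂ l hl j hj' t ht
      refine (key_ineq _ _ (C₃ * t) hR ha hb).trans ?_
      have hab : (q t j - q t i) - (q t j - q t l) = q t l - q t i := by abel
      rw [hab]
      have hld : ‖q t l - q t i‖ ≤ C₂ * t ^ ((2:ℝ)/3) :=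
        (hpara₁ l hl i hi hli t ht).2
      have hcalc : 4 * (C₂ * t ^ ((2:ℝ)/3)) / (C₃ * t) ^ 3
          = (4 * C₂ / C₃ ^ 3) * t ^ (-(7:ℝ)/3) := by
        have hpow3 : t ^ ((2:ℝ)/3) / t ^ (3:ℕ) = t ^ (-(7:ℝ)/3) := by
          rw [← Real.rpow_natCast t 3, ← Real.rpow_sub ht0]
          norm_num
        rw [mul_pow, ← hpow3]
        field_simp
      rw [← hcalc]
      gcongr
  calc ‖(m i * M⁻¹) • ∑ j ∈ sᶜ, ∑ l ∈ s, m l • (Gt i j - Gt l j)‖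
      = (m i * M⁻¹) * ‖∑ j ∈ sᶜ, ∑ l ∈ s, m l • (Gt i j - Gt l j)‖ := by
        rw [norm_smul, Real.norm_eq_abs, abs_of_pos (mul_pos (hm i) (inv_pos.mpr hM))]
    _ ≤ (m i * M⁻¹) * ∑ j ∈ sᶜ, ∑ l ∈ s, m l * (m j * ((4 * C₂ / C₃ ^ 3) * t ^ (-(7:ℝ)/3))) := by
        refine mul_le_mul_of_nonneg_left ?_ (mul_pos (hm i) (inv_pos.mpr hM)).le
        refine (norm_sum_le _ _).trans ?_
        refine Finset.sum_le_sum fun j hj => ?_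
        refine (norm_sum_le _ _).trans ?_
        exact Finset.sum_le_sum fun l hl => hterm j hj l hl
    _ = m i * (∑ j ∈ sᶜ, m j) * (4 * C₂ / C₃ ^ 3) * t ^ (-(7:ℝ)/3) := by
        have : ∀ j : Fin n, ∑ l ∈ s, m l * (m j * ((4 * C₂ / C₃ ^ 3) * t ^ (-(7:ℝ)/3)))
            = M * (m j * ((4 * C₂ / C₃ ^ 3) * t ^ (-(7:ℝ)/3))) := by
          intro j; rw [← Finset.sum_mul, ← hMdef]
        simp only [this]
        rw [← Finset.mul_sum, ← Finset.sum_mul]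
        have hM0 : M ≠ 0 := hM.ne'
        field_simp
    _ ≤ (m i * (∑ j ∈ sᶜ, m j) * (4 * C₂ / C₃ ^ 3) + 1) * t ^ (-(7:ℝ)/3) := by
        refine mul_le_mul_of_nonneg_right (by linarith) hpow.le
    _ = (m i * (∑ j ∈ sᶜ, m j) * (4 * C₂ / C₃ ^ 3) + 1) * t ^ (-(7:ℝ) / 3) := by norm_num
end
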